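/- arXiv:1306.6116 — 3 statements merged into one kernel-verified Lean document; each statement's English description precedes it below -/
import Mathlib

section
/- Under the same assumptions (f bounded strictly increasing with asymptotes c₁ at +∞ and −c₂ at −∞; n with density symmetric about 0; σ_i → ∞), lim_{L→∞} (1/L) ∑_{i=1}^L E[f(θ + σ_i n) − f(σ_i n)] = 0 for every θ > 0; i.e., the asymptotic deflection coefficient numerator vanishes. -/
/-!
For every `x ≠ 0` the points `σ i * x` and `θ + σ i * x` run off together to `+∞` or to `-∞`,
where `f` has a finite limit, so `f (θ + σ i * x) - f (σ i * x) → 0`. The two half-lines carry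
all the mass of `μ`, so this holds almost everywhere, and dominated convergence (with the bound
`2 c`) makes each expectation tend to `0`; Cesàro averaging preserves the limit.
-/

open Filter Finset MeasureTheory
open scoped Topology

lemma Filter.Tendsto.sub_comp_const_add {ι : Type*} {l : Filter ι} {F : Filter ℝ}
    {f : ℝ → ℝ} {a θ : ℝ} {u : ι → ℝ} (hf : Tendsto f F (𝓝 a)) (hu : Tendsto u l F)
    (hθu : Tendsto (fun i => θ + u i) l F) :
    Tendsto (fun i => f (θ + u i) - f (u i)) l (𝓝 0) := by
  simpa using (hf.comp hθu).sub (hf.comp hu)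

lemma tendsto_sub_comp_const_add_mul {ι : Type*} {l : Filter ι} {f : ℝ → ℝ} {c₁ c₂ : ℝ}
    (htop : Tendsto f atTop (𝓝 c₁)) (hbot : Tendsto f atBot (𝓝 c₂))
    {σ : ι → ℝ} (hσ : Tendsto σ l atTop) (θ : ℝ) {x : ℝ} (hx : x ≠ 0) :
    Tendsto (fun i => f (θ + σ i * x) - f (σ i * x)) l (𝓝 0) := by
  rcases hx.lt_or_gt with hneg | hpos
  · have hσx : Tendsto (fun i => σ i * x) l atBot := hσ.atTop_mul_const_of_neg hneg
    exact hbot.sub_comp_const_add hσx (tendsto_atBot_add_const_left l θ hσx)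
  · have hσx : Tendsto (fun i => σ i * x) l atTop := hσ.atTop_mul_const hpos
    exact htop.sub_comp_const_add hσx (tendsto_atTop_add_const_left l θ hσx)

lemma measure_singleton_eq_zero_of_Iio_add_Ioi {μ : Measure ℝ} [IsProbabilityMeasure μ]
    {a : ℝ} (h : μ (Set.Iio a) + μ (Set.Ioi a) = 1) : μ {a} = 0 := by
  rwa [← prob_compl_eq_one_iff (measurableSet_singleton a), ← Set.Iio_union_Ioi,
    measure_union (Set.Ioi_disjoint_Iio_same.symm) measurableSet_Ioi]

lemma tendsto_integral_sub_comp_const_add_mul {ι : Type*} {l : Filter ι} [l.IsCountablyGenerated]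
    {f : ℝ → ℝ} {c c₁ c₂ : ℝ} (hf : Measurable f) (hbdd : ∀ x, |f x| ≤ c)
    (htop : Tendsto f atTop (𝓝 c₁)) (hbot : Tendsto f atBot (𝓝 c₂))
    {μ : Measure ℝ} [IsFiniteMeasure μ] (hμ0 : μ {0} = 0)
    {σ : ι → ℝ} (hσ : Tendsto σ l atTop) (θ : ℝ) :
    Tendsto (fun i => ∫ x, (f (θ + σ i * x) - f (σ i * x)) ∂μ) l (𝓝 0) := by
  have hmeas : ∀ i, Measurable fun x => f (θ + σ i * x) - f (σ i * x) := fun i =>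
    (hf.comp ((measurable_const.mul measurable_id).const_add θ)).sub
      (hf.comp (measurable_const.mul measurable_id))
  have hbound : ∀ i x, ‖f (θ + σ i * x) - f (σ i * x)‖ ≤ 2 * c := fun i x => by
    rw [Real.norm_eq_abs]
    linarith [abs_sub (f (θ + σ i * x)) (f (σ i * x)), hbdd (θ + σ i * x), hbdd (σ i * x)]
  have hlim : ∀ᵐ x ∂μ, Tendsto (fun i => f (θ + σ i * x) - f (σ i * x)) l (𝓝 0) :=
    measure_mono_null (fun x hx => Set.mem_singleton_iff.2 <| by
      by_contra hx0
      exact hx (tendsto_sub_comp_const_add_mul htop hbot hσ θ hx0)) hμ0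
  simpa using tendsto_integral_filter_of_dominated_convergence (fun _ => 2 * c)
    (Eventually.of_forall fun i => (hmeas i).aestronglyMeasurable)
    (Eventually.of_forall fun i => Eventually.of_forall (hbound i)) (integrable_const _) hlim

theorem deflection_numerator_vanishes_when_sigma_unbounded_general
    (f : ℝ → ℝ) (c c₁ c₂ : ℝ)
    (hmono : StrictMono f)
    (hbdd : ∀ x : ℝ, |f x| ≤ c)
    (htop : Tendsto f atTop (nhds c₁))
    (hbot : Tendsto f atBot (nhds (-c₂)))
    (μ : Measure ℝ) [IsProbabilityMeasure μ]
    (hpos : μ {x : ℝ | 0 < x} = 1 / 2)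
    (hneg : μ {x : ℝ | x < 0} = 1 / 2)
    (σ : ℕ → ℝ)
    (hσ : Tendsto σ atTop atTop)
    (θ : ℝ) :
    Tendsto
      (fun L : ℕ =>
        (1 / (L : ℝ)) *
          ∑ i ∈ Finset.range L, ∫ x, (f (θ + σ i * x) - f (σ i * x)) ∂μ)
      atTop (nhds 0) := by
  have hμ0 : μ {0} = 0 := measure_singleton_eq_zero_of_Iio_add_Ioi <| by
    change μ {x | x < 0} + μ {x | 0 < x} = 1
    rw [hpos, hneg, one_div, ENNReal.inv_two_add_inv_two]
  simpa only [one_div] using (tendsto_integral_sub_comp_const_add_mul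
    hmono.monotone.measurable hbdd htop hbot hμ0 hσ θ).cesaro

theorem deflection_numerator_vanishes_when_sigma_unbounded
    (f : ℝ → ℝ) (c c₁ c₂ : ℝ)
    (hmono : StrictMono f)
    (hbdd : ∀ x : ℝ, |f x| ≤ c)
    (htop : Tendsto f atTop (nhds c₁))
    (hbot : Tendsto f atBot (nhds (-c₂)))
    (μ : Measure ℝ) [IsProbabilityMeasure μ]
    (hpos : μ {x : ℝ | 0 < x} = 1 / 2)
    (hneg : μ {x : ℝ | x < 0} = 1 / 2)
    (σ : ℕ → ℝ) (hσpos : ∀ i, 0 < σ i)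
    (hσ : Tendsto σ atTop atTop)
    (θ : ℝ) (hθ : 0 < θ) :
    Tendsto
      (fun L : ℕ =>
        (1 / (L : ℝ)) *
          ∑ i ∈ Finset.range L, ∫ x, (f (θ + σ i * x) - f (σ i * x)) ∂μ)
      atTop (nhds 0) :=
  deflection_numerator_vanishes_when_sigma_unbounded_general f c c₁ c₂ hmono hbdd htop hbot μ hpos
    hneg σ hσ θ
end

section
/- Let f be the symmetric uniform quantizer with M = 2K+1 levels and step Δ > 0: f(x) = kΔ for (k−1/2)Δ ≤ x < (k+1/2)Δ when |k| ≤ K, f(x) = KΔ for x ≥ (K+1/2)Δ, and f(x) = −KΔ for x ≤ −(K+1/2)Δ. Let n be a random variable whose law assigns positive probability to every nonempty open interval (infinite support with a positive density), let σ > 0 and θ > 0. Then E[f(θ + σn) − f(σn)] > 0. -/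
/-!
Both terms of the integrand are values of a bounded non-decreasing function, so the integrand is
bounded, measurable and nonnegative. The quantizer jumps from `≤ 0` to `Δ` at `Δ / 2`, so the
integrand is positive whenever `σ x ∈ (Δ / 2 - θ, Δ / 2)`, an interval of positive `μ`-mass.
-/

open MeasureTheory

/-- The symmetric uniform quantizer with `2K+1` levels and step `Δ`:
`f x = kΔ` for `(k-1/2)Δ ≤ x < (k+1/2)Δ` when `|k| ≤ K`, saturating at `±KΔ`. -/
noncomputable def uniformQuantizer (K : ℕ) (Δ : ℝ) (x : ℝ) : ℝ :=
  Δ * (max (-(K : ℤ)) (min (K : ℤ) ⌊x / Δ + 1 / 2⌋) : ℤ)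

theorem integral_sub_comp_shift_pos {f : ℝ → ℝ} (hf : Monotone f) {C : ℝ}
    (hC : ∀ y, |f y| ≤ C) {c : ℝ} (hjump : ∀ y < c, f y < f c)
    {μ : Measure ℝ} [IsFiniteMeasure μ] (hsupp : ∀ a b : ℝ, a < b → 0 < μ (Set.Ioo a b))
    {σ θ : ℝ} (hσ : 0 < σ) (hθ : 0 < θ) :
    0 < ∫ x, (f (θ + σ * x) - f (σ * x)) ∂μ := by
  set g : ℝ → ℝ := fun x => f (θ + σ * x) - f (σ * x)
  have hg_nonneg : 0 ≤ g := fun x => sub_nonneg.mpr (hf (by linarith))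
  have hg_meas : Measurable g :=
    (hf.measurable.comp ((measurable_const_mul σ).const_add θ)).sub
      (hf.measurable.comp (measurable_const_mul σ))
  have hg_int : Integrable g μ := by
    refine .of_bound hg_meas.aestronglyMeasurable (C + C) (.of_forall fun x => ?_)
    exact (abs_sub _ _).trans (add_le_add (hC _) (hC _))
  have hpos : Set.Ioo ((c - θ) / σ) (c / σ) ⊆ Function.support g := by
    rintro x ⟨hlo, hhi⟩
    rw [div_lt_iff₀' hσ] at hlo
    rw [lt_div_iff₀' hσ] at hhi
    have : f (σ * x) < f (θ + σ * x) := (hjump _ hhi).trans_le (hf (by linarith))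
    exact (sub_pos.mpr this).ne'
  rw [integral_pos_iff_support_of_nonneg hg_nonneg hg_int]
  exact (hsupp _ _ (div_lt_div_of_pos_right (by linarith) hσ)).trans_le (measure_mono hpos)

section uniformQuantizer

variable {K : ℕ} {Δ : ℝ}

theorem uniformQuantizer_monotone (hΔ : 0 ≤ Δ) : Monotone (uniformQuantizer K Δ) := by
  intro x y hxy
  unfold uniformQuantizer
  gcongr

theorem abs_uniformQuantizer_le (hΔ : 0 ≤ Δ) (x : ℝ) : |uniformQuantizer K Δ x| ≤ Δ * K := by
  unfold uniformQuantizer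
  rw [abs_mul, abs_of_nonneg hΔ]
  gcongr
  rw [abs_le]
  constructor
  · exact_mod_cast le_max_left _ _
  · exact_mod_cast max_le (neg_le_self (by positivity)) (min_le_left _ _)

theorem uniformQuantizer_nonpos_of_lt (hΔ : 0 < Δ) {x : ℝ} (hx : x < Δ / 2) :
    uniformQuantizer K Δ x ≤ 0 := by
  have hfloor : ⌊x / Δ + 1 / 2⌋ ≤ 0 := by
    rw [← Int.lt_add_one_iff, Int.floor_lt]
    have : x / Δ < 1 / 2 := by rw [div_lt_iff₀ hΔ]; linarith
    push_cast
    linarith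
  unfold uniformQuantizer
  refine mul_nonpos_of_nonneg_of_nonpos hΔ.le ?_
  exact_mod_cast max_le (by omega) ((min_le_right _ _).trans hfloor)

theorem uniformQuantizer_half_step (hK : 1 ≤ K) (hΔ : 0 < Δ) :
    uniformQuantizer K Δ (Δ / 2) = Δ := by
  have hfloor : ⌊Δ / 2 / Δ + 1 / 2⌋ = 1 := by
    rw [div_right_comm, div_self hΔ.ne']
    norm_num
  unfold uniformQuantizer
  rw [hfloor, min_eq_right (by exact_mod_cast hK), max_eq_right (by omega)]
  simp

theorem uniformQuantizer_lt_half_step (hK : 1 ≤ K) (hΔ : 0 < Δ) {x : ℝ} (hx : x < Δ / 2) :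
    uniformQuantizer K Δ x < uniformQuantizer K Δ (Δ / 2) := by
  rw [uniformQuantizer_half_step hK hΔ]
  exact (uniformQuantizer_nonpos_of_lt hΔ hx).trans_lt hΔ

end uniformQuantizer

theorem quantizer_deflection_positive
    (K : ℕ) (hK : 1 ≤ K) (Δ : ℝ) (hΔ : 0 < Δ)
    (μ : Measure ℝ) [IsProbabilityMeasure μ]
    (hsupp : ∀ a b : ℝ, a < b → 0 < μ (Set.Ioo a b))
    (σ : ℝ) (hσ : 0 < σ) (θ : ℝ) (hθ : 0 < θ) :
    0 < ∫ x, (uniformQuantizer K Δ (θ + σ * x) - uniformQuantizer K Δ (σ * x)) ∂μ :=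
  integral_sub_comp_shift_pos (uniformQuantizer_monotone hΔ.le) (abs_uniformQuantizer_le hΔ.le)
    (fun _ => uniformQuantizer_lt_half_step hK hΔ) hsupp hσ hθ
end

section
/- Strong consistency of the bounded-transmission estimator: let f satisfy (A1)–(A2), let n_i be i.i.d. with common law μ, σ_i ∈ (0, σ_max], and suppose h(θ) := lim_{L→∞} (1/L)∑_{i=1}^L E[f(θ + σ_i n_i)] exists and is continuous and strictly increasing with continuous inverse. If z_L := √(P_T)·(1/L)∑_{i=1}^L f(θ₀ + σ_i n_i) + v/√L for fixed θ₀ and fixed channel noise realization scaled by 1/√L, then the estimator θ̂_L := h⁻¹(z_L/√(P_T)) converges to θ₀ almost surely. -/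
open Filter Finset MeasureTheory ProbabilityTheory Real Topology NNReal

/-!
The centred samples `f (θ₀ + σ i * n i) - E[f (θ₀ + σ i * n i)]` are independent with values in an
interval of length `2c`, so by Hoeffding's lemma they are uniformly sub-Gaussian. Hoeffding's
inequality then makes the tail probabilities of their averages exponentially small, hence summable,
and Borel–Cantelli yields the strong law of large numbers. The channel term `v / √L` vanishes
pointwise, so `z_L / √P_T → h θ₀` almost surely, and continuity of `h⁻¹` finishes the proof.
-/

section StrongLaw

variable {Ω : Type*} [MeasurableSpace Ω] {P : Measure Ω}

theorem ae_tendsto_zero_of_summable_measureReal_le_abs [IsFiniteMeasure P] {Y : ℕ → Ω → ℝ}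
    (hY : ∀ ε > 0, Summable fun L ↦ P.real {ω | ε ≤ |Y L ω|}) :
    ∀ᵐ ω ∂P, Tendsto (fun L ↦ Y L ω) atTop (𝓝 0) := by
  have h_event (j : ℕ) : ∀ᵐ ω ∂P, ∀ᶠ L in atTop, ω ∉ {ω | 1 / ((j : ℝ) + 1) ≤ |Y L ω|} := by
    apply ae_eventually_notMem
    refine ne_of_eq_of_ne (tsum_congr fun L ↦ (ofReal_measureReal (measure_ne_top _ _)).symm) ?_
    rw [← ENNReal.ofReal_tsum_of_nonneg (fun _ ↦ measureReal_nonneg)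
      (hY _ (Nat.one_div_pos_of_nat (n := j)))]
    exact ENNReal.ofReal_ne_top
  filter_upwards [ae_all_iff.2 h_event] with ω hω
  rw [tendsto_zero_iff_abs_tendsto_zero, tendsto_order]
  refine ⟨fun a ha ↦ Eventually.of_forall fun L ↦ ha.trans_le (abs_nonneg _), fun ε hε ↦ ?_⟩
  obtain ⟨j, hj⟩ := exists_nat_one_div_lt hε
  filter_upwards [hω j] with L hL
  exact (not_le.1 hL).trans hj

variable [IsProbabilityMeasure P] {X : ℕ → Ω → ℝ} {c : ℝ≥0}

theorem measureReal_le_abs_sum_range_div_le_two_mul_exp (hindep : iIndepFun X P)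
    (hX : ∀ i, HasSubgaussianMGF (X i) c P) {ε : ℝ} (hε : 0 < ε) (L : ℕ) :
    P.real {ω | ε ≤ |(∑ i ∈ range L, X i ω) / L|} ≤ 2 * exp (L * -(ε ^ 2 / (2 * c))) := by
  rcases L.eq_zero_or_pos with rfl | hL
  · simp [hε.not_ge]
  have hL' : (0 : ℝ) < L := Nat.cast_pos.2 hL
  have hindep_neg : iIndepFun (fun i ω ↦ -X i ω) P :=
    hindep.comp (fun _ x ↦ -x) fun _ ↦ measurable_neg
  have hoeffding (Z : ℕ → Ω → ℝ) (hZ : iIndepFun Z P) (hZc : ∀ i, HasSubgaussianMGF (Z i) c P) :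
      P.real {ω | ε * L ≤ ∑ i ∈ range L, Z i ω} ≤ exp (L * -(ε ^ 2 / (2 * c))) := by
    refine (HasSubgaussianMGF.measure_sum_range_ge_le_of_iIndepFun hZ (fun i _ ↦ hZc i)
      (by positivity)).trans_eq ?_
    congr 1
    field_simp
  calc P.real {ω | ε ≤ |(∑ i ∈ range L, X i ω) / L|}
      ≤ P.real ({ω | ε * L ≤ ∑ i ∈ range L, X i ω} ∪
          {ω | ε * L ≤ ∑ i ∈ range L, -X i ω}) := by
        refine measureReal_mono fun ω hω ↦ ?_
        simp only [Set.mem_ofPred_eq, abs_div, Nat.abs_cast, le_div_iff₀ hL'] at hω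
        simpa only [Set.mem_union, Set.mem_ofPred_eq, sum_neg_distrib] using le_abs.1 hω
    _ ≤ P.real {ω | ε * L ≤ ∑ i ∈ range L, X i ω} +
          P.real {ω | ε * L ≤ ∑ i ∈ range L, -X i ω} := measureReal_union_le _ _
    _ ≤ exp (L * -(ε ^ 2 / (2 * c))) + exp (L * -(ε ^ 2 / (2 * c))) :=
        add_le_add (hoeffding X hindep hX) (hoeffding _ hindep_neg fun i ↦ (hX i).neg)
    _ = 2 * exp (L * -(ε ^ 2 / (2 * c))) := by ring

theorem ae_tendsto_sum_range_div_of_hasSubgaussianMGF (hc : 0 < c) (hindep : iIndepFun X P)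
    (hX : ∀ i, HasSubgaussianMGF (X i) c P) :
    ∀ᵐ ω ∂P, Tendsto (fun L : ℕ ↦ (∑ i ∈ range L, X i ω) / L) atTop (𝓝 0) := by
  refine ae_tendsto_zero_of_summable_measureReal_le_abs fun ε hε ↦ ?_
  have h_exp : Summable fun L : ℕ ↦ 2 * exp (L * -(ε ^ 2 / (2 * c))) :=
    (summable_exp_nat_mul_iff.2 (neg_neg_of_pos (by positivity))).mul_left 2
  exact h_exp.of_nonneg_of_le (fun _ ↦ measureReal_nonneg)
    (measureReal_le_abs_sum_range_div_le_two_mul_exp hindep hX hε)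

theorem ae_tendsto_sum_range_sub_integral_div_of_mem_Icc {Y : ℕ → Ω → ℝ} {a b : ℝ} (hab : a < b)
    (hmeas : ∀ i, AEMeasurable (Y i) P) (hindep : iIndepFun Y P)
    (hY : ∀ i ω, Y i ω ∈ Set.Icc a b) :
    ∀ᵐ ω ∂P, Tendsto (fun L : ℕ ↦ (∑ i ∈ range L, (Y i ω - P[Y i])) / L) atTop (𝓝 0) :=
  ae_tendsto_sum_range_div_of_hasSubgaussianMGF
    (pow_pos (div_pos (nnnorm_pos.2 (sub_ne_zero.2 hab.ne')) two_pos) 2)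
    (hindep.comp (fun i y ↦ y - P[Y i]) fun _ ↦ measurable_sub_const _ :)
    fun i ↦ hasSubgaussianMGF_of_mem_Icc (hmeas i) (ae_of_all _ (hY i))

end StrongLaw

theorem bounded_transmission_estimator_strongly_consistent_general
    {Ω : Type*} [MeasurableSpace Ω] (P : Measure Ω) [IsProbabilityMeasure P]
    (f : ℝ → ℝ) (c : ℝ) (hc : 0 < c)
    (hdiff : Differentiable ℝ f)
    (hbdd : ∀ x : ℝ, |f x| ≤ c)
    (n : ℕ → Ω → ℝ) (hmeas : ∀ i, Measurable (n i))
    (hindep : iIndepFun n P)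
    (σ : ℕ → ℝ)
    (θ₀ : ℝ)
    (h hinv : ℝ → ℝ)
    (hinv_cont : Continuous hinv) (hinv_left : ∀ y : ℝ, hinv (h y) = y)
    (hlim : Tendsto
      (fun L : ℕ => (1 / (L : ℝ)) * ∑ i ∈ Finset.range L, ∫ ω, f (θ₀ + σ i * n i ω) ∂P)
      atTop (nhds (h θ₀)))
    (PT : ℝ) (hPT : 0 < PT)
    (v : Ω → ℝ) :
    ∀ᵐ ω ∂P,
      Tendsto
        (fun L : ℕ =>
          hinv
            ((Real.sqrt PT * ((1 / (L : ℝ)) * ∑ i ∈ Finset.range L, f (θ₀ + σ i * n i ω)) +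
                v ω / Real.sqrt L) / Real.sqrt PT))
        atTop (nhds θ₀) := by
  have hf : Measurable f := hdiff.continuous.measurable
  have h_sample_indep : iIndepFun (fun i ω ↦ f (θ₀ + σ i * n i ω)) P :=
    hindep.comp (fun i x ↦ f (θ₀ + σ i * x)) fun _ ↦ by fun_prop
  filter_upwards [ae_tendsto_sum_range_sub_integral_div_of_mem_Icc (neg_lt_self hc)
    (fun _ ↦ by fun_prop) h_sample_indep fun i ω ↦ abs_le.1 (hbdd _)] with ω hω
  have h_avg : Tendsto (fun L : ℕ ↦ (1 / (L : ℝ)) * ∑ i ∈ range L, f (θ₀ + σ i * n i ω))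
      atTop (𝓝 (h θ₀)) := by
    convert hω.add hlim using 2 with L
    · rw [sum_sub_distrib]
      ring
    · rw [zero_add]
  have h_noise : Tendsto (fun L : ℕ ↦ v ω / √L / √PT) atTop (𝓝 0) := by
    simpa using (tendsto_const_nhds.div_atTop
      (tendsto_sqrt_atTop.comp tendsto_natCast_atTop_atTop)).div_const (√PT)
  have h_estimate := (hinv_cont.tendsto _).comp (h_avg.add h_noise)
  rw [add_zero, hinv_left] at h_estimate
  convert h_estimate using 2 with L
  have hPT' : √PT ≠ 0 := (sqrt_pos.2 hPT).ne'
  simp only [Function.comp_apply]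
  field_simp

theorem bounded_transmission_estimator_strongly_consistent
    {Ω : Type*} [MeasurableSpace Ω] (P : Measure Ω) [IsProbabilityMeasure P]
    (f : ℝ → ℝ) (c d : ℝ) (hc : 0 < c) (hd : 0 < d)
    (hdiff : Differentiable ℝ f)
    (hderiv : ∀ x : ℝ, 0 < deriv f x ∧ deriv f x ≤ d)
    (hbdd : ∀ x : ℝ, |f x| ≤ c)
    (n : ℕ → Ω → ℝ) (hmeas : ∀ i, Measurable (n i))
    (hindep : iIndepFun n P)
    (σ : ℕ → ℝ) (σmax : ℝ) (hσ : ∀ i, 0 < σ i ∧ σ i ≤ σmax)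
    (θ₀ : ℝ)
    (h hinv : ℝ → ℝ)
    (hmono : StrictMono h) (hcont : Continuous h)
    (hinv_cont : Continuous hinv) (hinv_left : ∀ y : ℝ, hinv (h y) = y)
    (hlim : Tendsto
      (fun L : ℕ => (1 / (L : ℝ)) * ∑ i ∈ Finset.range L, ∫ ω, f (θ₀ + σ i * n i ω) ∂P)
      atTop (nhds (h θ₀)))
    (PT : ℝ) (hPT : 0 < PT)
    (v : Ω → ℝ) (C : ℝ) (hv : ∀ᵐ ω ∂P, |v ω| ≤ C) :
    ∀ᵐ ω ∂P,
      Tendsto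
        (fun L : ℕ =>
          hinv
            ((Real.sqrt PT * ((1 / (L : ℝ)) * ∑ i ∈ Finset.range L, f (θ₀ + σ i * n i ω)) +
                v ω / Real.sqrt L) / Real.sqrt PT))
        atTop (nhds θ₀) :=
  bounded_transmission_estimator_strongly_consistent_general P f c hc hdiff hbdd n hmeas hindep σ θ₀
    h hinv hinv_cont hinv_left hlim PT hPT v
end
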